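/- arXiv:2109.14854 — 5 statements merged into one kernel-verified Lean document; each statement's English description precedes it below -/
import Mathlib

section
/- The stacked ReLU function ξ⁺(x) = Σ_{l=1}^{d} w_l · ReLU(x + b_l), with weights satisfying Σ_{i=1}^{l} w_i ≥ 0 for all l = 1,...,d, and biases satisfying b_1 = 0 and b_l ≤ b_{l-1} for l = 2,...,d, is monotonically nondecreasing on (0,∞) and is identically zero on (-∞, 0]. -/
/-!
For `x ≤ y` the increment `ξ⁺ y - ξ⁺ x = ∑ w_l (ReLU (y + b_l) - ReLU (x + b_l))` has coefficients
that are nonnegative and, by convexity of ReLU and since the biases decrease, nonincreasing in `l`.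
Abel summation writes such a sum as a nonnegative combination of the partial sums of the weights,
so it is nonnegative: `ξ⁺` is monotone on all of `ℝ`. For `x ≤ 0` every `x + b_l ≤ x + b_1 ≤ 0`.
-/

open Finset

theorem Finset.sum_mul_nonneg_of_partialSums_nonneg {ι R : Type*} [LinearOrder ι]
    [CommRing R] [PartialOrder R] [IsOrderedRing R] (s : Finset ι) {w c : ι → R}
    (hw : ∀ l ∈ s, 0 ≤ ∑ i ∈ s with i ≤ l, w i) (hc : ∀ i ∈ s, 0 ≤ c i) (hanti : AntitoneOn c s) :
    0 ≤ ∑ i ∈ s, w i * c i := by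
  induction s using Finset.induction_on_max generalizing c with
  | empty => simp
  | insert a s hlt ih =>
    have ha : a ∈ insert a s := mem_insert_self a s
    have hsplit : ∑ i ∈ insert a s, w i * c i
        = ∑ i ∈ s, w i * (c i - c a) + c a * ∑ i ∈ insert a s, w i := by
      have has : a ∉ s := fun h => (hlt a h).false
      simp only [sum_insert has, mul_sub, sum_sub_distrib, ← sum_mul]
      ring
    have hfilter : ∀ l ∈ s, {i ∈ insert a s | i ≤ l} = {i ∈ s | i ≤ l} := fun l hl => by
      rw [filter_insert, if_neg (hlt l hl).not_ge]
    have hrest : 0 ≤ ∑ i ∈ s, w i * (c i - c a) :=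
      ih (fun l hl => hfilter l hl ▸ hw l (mem_insert_of_mem hl))
        (fun i hi => sub_nonneg.2 <| hanti (mem_insert_of_mem hi) ha (hlt i hi).le)
        (fun i hi j hj hij => sub_le_sub_right
          (hanti (mem_insert_of_mem hi) (mem_insert_of_mem hj) hij) _)
    have htotal : 0 ≤ ∑ i ∈ insert a s, w i := by
      have := hw a ha
      rwa [filter_true_of_mem fun i hi => (mem_insert.1 hi).elim le_of_eq fun h => (hlt i h).le]
        at this
    rw [hsplit]
    exact add_nonneg hrest (mul_nonneg (hc a ha) htotal)

theorem max_zero_sub_max_zero_le_of_le {x y a a' : ℝ} (hxy : x ≤ y) (ha : a' ≤ a) :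
    max (y + a') 0 - max (x + a') 0 ≤ max (y + a) 0 - max (x + a) 0 := by
  simp only [max_def]
  split_ifs <;> linarith

theorem monotone_sum_mul_relu {ι : Type*} [Fintype ι] [LinearOrder ι] {w b : ι → ℝ}
    (hw : ∀ l, 0 ≤ ∑ i with i ≤ l, w i) (hb : Antitone b) :
    Monotone fun x : ℝ => ∑ l, w l * max (x + b l) 0 := by
  intro x y hxy
  have := sum_mul_nonneg_of_partialSums_nonneg univ
    (c := fun l => max (y + b l) 0 - max (x + b l) 0)
    (fun l _ => hw l) (fun l _ => sub_nonneg.2 (by gcongr))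
    (fun i _ j _ hij => max_zero_sub_max_zero_le_of_le hxy (hb hij))
  simpa only [mul_sub, sum_sub_distrib, sub_nonneg] using this

theorem stackedReLU_pos_monotone (d : ℕ) (hd : 0 < d) (w b : Fin d → ℝ)
    (hw : ∀ l : Fin d, 0 ≤ ∑ i ∈ Finset.univ.filter (fun i => i ≤ l), w i)
    (hb1 : b ⟨0, hd⟩ = 0)
    (hbmono : ∀ i j : Fin d, i ≤ j → b j ≤ b i) :
    MonotoneOn (fun x : ℝ => ∑ l, w l * max (x + b l) 0) (Set.Ioi 0) ∧
    ∀ x : ℝ, x ≤ 0 → ∑ l, w l * max (x + b l) 0 = 0 := by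
  refine ⟨(monotone_sum_mul_relu hw fun i j => hbmono i j).monotoneOn _, fun x hx => ?_⟩
  refine sum_eq_zero fun l _ => ?_
  have hbl : b l ≤ 0 := hb1 ▸ hbmono ⟨0, hd⟩ l (Nat.zero_le _)
  rw [max_eq_right (by linarith), mul_zero]
end

section
/- The stacked ReLU function ξ⁻(x) = Σ_{l=1}^{d} w_l · ReLU(-x + b_l), with partial sums Σ_{i=1}^{l} w_i ≤ 0 for all l, b_1 = 0, and b_l ≤ b_{l-1} for l ≥ 2, is monotonically nondecreasing on (-∞, 0) and identically zero on [0, ∞). -/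
/-!
For `x ≤ y` the increment `ξ⁻(y) - ξ⁻(x)` is `∑ w l * g l` with
`g l = ReLU(b l - y) - ReLU(b l - x)` nonpositive and, because `b` is nonincreasing,
nondecreasing in `l`; summation by parts against the nonpositive prefix sums of `w` makes it
nonnegative. For `x ≥ 0` every `ReLU(b l - x)` vanishes since `b l ≤ b 1 = 0`.
-/

/-- Abel summation in disguise: splitting off the largest index `a`, the sum is
`∑ w i * (g i - g a) + g a * ∑ w i`, and both parts are nonnegative. -/
theorem Finset.sum_mul_nonneg_of_prefix_sums_nonpos {ι : Type*} [LinearOrder ι]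
    (s : Finset ι) (w g : ι → ℝ) (hw : ∀ l ∈ s, ∑ i ∈ s.filter (· ≤ l), w i ≤ 0)
    (hg : MonotoneOn g s) (hg_nonpos : ∀ i ∈ s, g i ≤ 0) :
    0 ≤ ∑ i ∈ s, w i * g i := by
  induction s using Finset.induction_on_max generalizing g with
  | empty => simp
  | insert a s ha ih =>
    have ha_notMem : a ∉ s := fun h => lt_irrefl a (ha a h)
    have hprefix : ∀ l ∈ s, (insert a s).filter (· ≤ l) = s.filter (· ≤ l) := by
      intro l hl
      rw [Finset.filter_insert, if_neg (not_le.mpr (ha l hl))]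
    have hshifted : 0 ≤ ∑ i ∈ s, w i * (g i - g a) := by
      refine ih (fun i => g i - g a) (fun l hl => ?_) ?_ (fun i hi => ?_)
      · rw [← hprefix l hl]
        exact hw l (Finset.mem_insert_of_mem hl)
      · exact fun i hi j hj hij => sub_le_sub_right
          (hg (Finset.mem_insert_of_mem hi) (Finset.mem_insert_of_mem hj) hij) _
      · exact sub_nonpos.mpr <| hg (Finset.mem_insert_of_mem hi) (Finset.mem_insert_self a s)
          (ha i hi).le
    have htotal : ∑ i ∈ insert a s, w i ≤ 0 := by
      have := hw a (Finset.mem_insert_self a s)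
      rwa [Finset.filter_true_of_mem fun i hi =>
        (Finset.mem_insert.mp hi).elim (·.le) fun h => (ha i h).le] at this
    have hsplit : ∑ i ∈ insert a s, w i * g i
        = ∑ i ∈ s, w i * (g i - g a) + g a * ∑ i ∈ insert a s, w i := by
      rw [Finset.sum_insert ha_notMem, Finset.sum_insert ha_notMem, mul_add, Finset.mul_sum]
      simp only [mul_sub, Finset.sum_sub_distrib, mul_comm (g a)]
      ring
    rw [hsplit]
    exact add_nonneg hshifted
      (mul_nonneg_of_nonpos_of_nonpos (hg_nonpos a (Finset.mem_insert_self a s)) htotal)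

theorem antitone_max_sub_max_sub {x y : ℝ} (hxy : x ≤ y) :
    Antitone fun t : ℝ => max (-y + t) 0 - max (-x + t) 0 := by
  intro s t hst
  simp only
  rcases max_cases (-y + t) 0 with ⟨e1, f1⟩ | ⟨e1, f1⟩ <;>
  rcases max_cases (-y + s) 0 with ⟨e2, f2⟩ | ⟨e2, f2⟩ <;>
  rcases max_cases (-x + t) 0 with ⟨e3, f3⟩ | ⟨e3, f3⟩ <;>
  rcases max_cases (-x + s) 0 with ⟨e4, f4⟩ | ⟨e4, f4⟩ <;>
  rw [e1, e2, e3, e4] <;> linarith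

theorem stackedReLU_neg_monotone (d : ℕ) (hd : 0 < d) (w b : Fin d → ℝ)
    (hw : ∀ l : Fin d, ∑ i ∈ Finset.univ.filter (fun i => i ≤ l), w i ≤ 0)
    (hb1 : b ⟨0, hd⟩ = 0)
    (hbmono : ∀ i j : Fin d, i ≤ j → b j ≤ b i) :
    MonotoneOn (fun x : ℝ => ∑ l, w l * max (-x + b l) 0) (Set.Iio 0) ∧
    ∀ x : ℝ, 0 ≤ x → ∑ l, w l * max (-x + b l) 0 = 0 := by
  refine ⟨Monotone.monotoneOn (fun x y hxy => ?_) _, fun x hx => ?_⟩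
  · have hgap : Monotone fun l => max (-y + b l) 0 - max (-x + b l) 0 :=
      (antitone_max_sub_max_sub hxy).comp fun i j hij => hbmono i j hij
    simpa only [mul_sub, Finset.sum_sub_distrib, sub_nonneg] using
      Finset.univ.sum_mul_nonneg_of_prefix_sums_nonpos w _ (fun l _ => hw l)
        (hgap.monotoneOn _) fun l _ => sub_nonpos.mpr (max_le_max (by linarith) le_rfl)
  · refine Finset.sum_eq_zero fun l _ => ?_
    have hbl : b l ≤ 0 := hb1 ▸ hbmono ⟨0, hd⟩ l (Nat.zero_le l.val)
    rw [max_eq_right (by linarith), mul_zero]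
end

section
/- Let X be an n×n symmetric positive definite matrix and g : ℝⁿ → ℝⁿ act componentwise where each g_i is differentiable, satisfies g_i(v_i) = 0 exactly when v_i ∈ [v̲_i, v̄_i], and g_i'(v_i) < 0 for v_i outside [v̲_i, v̄_i] while g_i'(v_i) = 0 inside. If v ∈ ℝⁿ satisfies diag(g_i'(v_i)) · X · g(v) = 0, then g(v) = 0, i.e., v_i ∈ [v̲_i, v̄_i] for all i. -/
/-! A vanishing quadratic form `wᵀ X w` forces `w = 0`, so it suffices that every summand
`w i * (X w) i` vanishes. For `w = g(v)` this holds componentwise: inside the deadband `w i = 0`,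
outside it `g_i'(v_i) < 0`, so the hypothesis forces `(X w) i = 0`. -/

open Matrix

theorem Matrix.PosDef.eq_zero_of_forall_mul_mulVec_eq_zero {ι R : Type*} [Fintype ι]
    [Ring R] [PartialOrder R] [StarRing R] [TrivialStar R] {X : Matrix ι ι R}
    (hX : X.PosDef) {w : ι → R} (hw : ∀ i, w i * (X *ᵥ w) i = 0) : w = 0 := by
  by_contra hne
  have hquad : star w ⬝ᵥ (X *ᵥ w) = 0 := by
    rw [star_trivial]
    exact Finset.sum_eq_zero fun i _ => hw i
  exact (hX.dotProduct_mulVec_pos hne).ne' hquad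

theorem invariant_set_in_deadband_general {n : ℕ} (X : Matrix (Fin n) (Fin n) ℝ)
    (hX : X.PosDef) (vlo vhi : Fin n → ℝ)
    (g : Fin n → ℝ → ℝ)
    (hzero : ∀ i x, g i x = 0 ↔ x ∈ Set.Icc (vlo i) (vhi i))
    (hneg : ∀ i x, x ∉ Set.Icc (vlo i) (vhi i) → deriv (g i) x < 0)
    (v : Fin n → ℝ)
    (h : ∀ i, deriv (g i) (v i) * X.mulVec (fun j => g j (v j)) i = 0) :
    ∀ i, v i ∈ Set.Icc (vlo i) (vhi i) := by
  set w : Fin n → ℝ := fun j => g j (v j)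
  have hsummand : ∀ i, w i * (X *ᵥ w) i = 0 := fun i => by
    by_cases hi : v i ∈ Set.Icc (vlo i) (vhi i)
    · rw [show w i = 0 from (hzero i (v i)).mpr hi, zero_mul]
    · rw [(mul_eq_zero.mp (h i)).resolve_left (hneg i (v i) hi).ne, mul_zero]
  have hw : w = 0 := hX.eq_zero_of_forall_mul_mulVec_eq_zero hsummand
  exact fun i => (hzero i (v i)).mp (congrFun hw i)

theorem invariant_set_in_deadband {n : ℕ} (X : Matrix (Fin n) (Fin n) ℝ)
    (hX : X.PosDef) (vlo vhi : Fin n → ℝ) (hlt : ∀ i, vlo i < vhi i)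
    (g : Fin n → ℝ → ℝ)
    (hdiff : ∀ i, Differentiable ℝ (g i))
    (hzero : ∀ i x, g i x = 0 ↔ x ∈ Set.Icc (vlo i) (vhi i))
    (hneg : ∀ i x, x ∉ Set.Icc (vlo i) (vhi i) → deriv (g i) x < 0)
    (hzeroderiv : ∀ i x, x ∈ Set.Icc (vlo i) (vhi i) → deriv (g i) x = 0)
    (v : Fin n → ℝ)
    (h : ∀ i, deriv (g i) (v i) * X.mulVec (fun j => g j (v j)) i = 0) :
    ∀ i, v i ∈ Set.Icc (vlo i) (vhi i) :=
  invariant_set_in_deadband_general X hX vlo vhi g hzero hneg v h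
end

section
/- Let X be a symmetric positive definite matrix and g : ℝⁿ → ℝⁿ componentwise with each g_i continuous, g_i(v_i) = 0 for v_i ∈ [v̲_i, v̄_i], strictly decreasing on (-∞, v̲_i] and on [v̄_i, ∞), and |g_i(v_i)| → ∞ as |v_i| → ∞. Then V(v) = ½ g(v)ᵀ X g(v) is nonnegative, radially unbounded (V(v) → ∞ as ‖v‖ → ∞), and V(v) = 0 if and only if v_i ∈ [v̲_i, v̄_i] for all i. -/
/-!
A positive definite `X` satisfies `c ‖x‖² ≤ xᵀ X x` for some `c > 0` (the minimum of the form on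
the unit sphere), so `V` is nonnegative, vanishes exactly where `g(v) = 0`, and tends to infinity
as soon as `‖g(v)‖` does. Strict monotonicity outside the deadband makes `g_i(v_i) = 0` force
`v_i ∈ [v̲_i, v̄_i]`, and coercivity of each `g_i` makes `v ↦ g(v)` map the cobounded filter of
`ℝⁿ` into itself.
-/

open Matrix Filter Bornology Set

variable {ι : Type*} [Fintype ι] {X : Matrix ι ι ℝ}

theorem Matrix.PosSemidef.dotProduct_mulVec_self_nonneg (hX : X.PosSemidef) (x : ι → ℝ) :
    0 ≤ x ⬝ᵥ X *ᵥ x := by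
  simpa using hX.dotProduct_mulVec_nonneg x

namespace Matrix.PosDef

theorem dotProduct_mulVec_self_pos (hX : X.PosDef) {x : ι → ℝ} (hx : x ≠ 0) :
    0 < x ⬝ᵥ X *ᵥ x := by
  simpa using hX.dotProduct_mulVec_pos hx

theorem dotProduct_mulVec_self_eq_zero_iff (hX : X.PosDef) {x : ι → ℝ} :
    x ⬝ᵥ X *ᵥ x = 0 ↔ x = 0 := by
  refine ⟨fun h => ?_, fun h => by simp [h]⟩
  by_contra hx
  exact (hX.dotProduct_mulVec_self_pos hx).ne' h

theorem exists_pos_le_dotProduct_mulVec_of_mem_sphere (hX : X.PosDef) :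
    ∃ c > 0, ∀ x ∈ Metric.sphere (0 : ι → ℝ) 1, c ≤ x ⬝ᵥ X *ᵥ x := by
  rcases (Metric.sphere (0 : ι → ℝ) 1).eq_empty_or_nonempty with hempty | hne
  · exact ⟨1, one_pos, by simp [hempty]⟩
  have hq : Continuous fun x : ι → ℝ => x ⬝ᵥ X *ᵥ x := by
    simp only [dotProduct, mulVec]
    fun_prop
  obtain ⟨x₀, hx₀, hmin⟩ := (isCompact_sphere (0 : ι → ℝ) 1).exists_isMinOn hne hq.continuousOn
  have hx₀ne : x₀ ≠ 0 := ne_zero_of_mem_unit_sphere ⟨x₀, hx₀⟩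
  exact ⟨_, hX.dotProduct_mulVec_self_pos hx₀ne, fun x hx => hmin hx⟩

theorem exists_pos_mul_sq_norm_le_dotProduct_mulVec (hX : X.PosDef) :
    ∃ c > 0, ∀ x : ι → ℝ, c * ‖x‖ ^ 2 ≤ x ⬝ᵥ X *ᵥ x := by
  obtain ⟨c, hc, hsphere⟩ := hX.exists_pos_le_dotProduct_mulVec_of_mem_sphere
  refine ⟨c, hc, fun x => ?_⟩
  rcases eq_or_ne x 0 with rfl | hx
  · simp
  have hnx : 0 < ‖x‖ := norm_pos_iff.mpr hx
  have hu : ‖x‖⁻¹ • x ∈ Metric.sphere (0 : ι → ℝ) 1 := by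
    simp [norm_smul, hnx.ne']
  have hscale : x ⬝ᵥ X *ᵥ x = ‖x‖ ^ 2 * ((‖x‖⁻¹ • x) ⬝ᵥ X *ᵥ (‖x‖⁻¹ • x)) := by
    simp only [mulVec_smul, smul_dotProduct, dotProduct_smul, smul_eq_mul]
    field_simp
  rw [hscale, mul_comm c]
  exact mul_le_mul_of_nonneg_left (hsphere _ hu) (by positivity)

theorem tendsto_dotProduct_mulVec_cobounded_atTop (hX : X.PosDef) :
    Tendsto (fun x : ι → ℝ => x ⬝ᵥ X *ᵥ x) (cobounded (ι → ℝ)) atTop := by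
  obtain ⟨c, hc, hbound⟩ := hX.exists_pos_mul_sq_norm_le_dotProduct_mulVec
  refine tendsto_atTop_mono hbound (Tendsto.const_mul_atTop hc ?_)
  exact (tendsto_pow_atTop two_ne_zero).comp tendsto_norm_cobounded_atTop

end Matrix.PosDef

theorem tendsto_cobounded_of_tendsto_abs {f : ℝ → ℝ}
    (htop : Tendsto (fun x => |f x|) atTop atTop) (hbot : Tendsto (fun x => |f x|) atBot atTop) :
    Tendsto f (cobounded ℝ) (cobounded ℝ) := by
  rw [← tendsto_norm_atTop_iff_cobounded, IsOrderBornology.cobounded_eq]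
  simpa only [Real.norm_eq_abs] using hbot.sup htop

theorem eq_zero_iff_mem_Icc_of_strictAntiOn {f : ℝ → ℝ} {a b x : ℝ} (hab : a ≤ b)
    (hzero : ∀ y ∈ Icc a b, f y = 0) (hlo : StrictAntiOn f (Iic a))
    (hhi : StrictAntiOn f (Ici b)) : f x = 0 ↔ x ∈ Icc a b := by
  refine ⟨fun hx => ?_, hzero x⟩
  by_contra hmem
  rcases not_and_or.mp hmem with hxa | hxb
  · have := hlo (le_of_not_ge hxa) (le_refl a) (lt_of_not_ge hxa)
    rw [hzero a ⟨le_rfl, hab⟩, hx] at this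
    exact this.false
  · have := hhi (le_refl b) (le_of_not_ge hxb) (lt_of_not_ge hxb)
    rw [hzero b ⟨hab, le_rfl⟩, hx] at this
    exact this.false

theorem exists_le_norm_forall_le_of_tendsto_cobounded {E : Type*} [SeminormedAddCommGroup E]
    {f : E → ℝ} (hf : Tendsto f (cobounded E) atTop) (M : ℝ) :
    ∃ R, ∀ x, R ≤ ‖x‖ → M ≤ f x := by
  simpa using (hasBasis_cobounded_norm.tendsto_iff atTop_basis).mp hf M trivial

theorem krasovskii_lyapunov_properties_general {n : ℕ} (X : Matrix (Fin n) (Fin n) ℝ)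
    (hX : X.PosDef) (vlo vhi : Fin n → ℝ) (hlt : ∀ i, vlo i < vhi i)
    (g : Fin n → ℝ → ℝ)
    (hzero : ∀ i, ∀ x ∈ Set.Icc (vlo i) (vhi i), g i x = 0)
    (hdec1 : ∀ i, StrictAntiOn (g i) (Set.Iic (vlo i)))
    (hdec2 : ∀ i, StrictAntiOn (g i) (Set.Ici (vhi i)))
    (hcoe1 : ∀ i, Filter.Tendsto (fun x => |g i x|) Filter.atTop Filter.atTop)
    (hcoe2 : ∀ i, Filter.Tendsto (fun x => |g i x|) Filter.atBot Filter.atTop) :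
    (∀ v : Fin n → ℝ,
        0 ≤ (1 / 2) * ((fun i => g i (v i)) ⬝ᵥ X.mulVec fun i => g i (v i))) ∧
    (∀ M : ℝ, ∃ R : ℝ, ∀ v : Fin n → ℝ, R ≤ ‖v‖ →
        M ≤ (1 / 2) * ((fun i => g i (v i)) ⬝ᵥ X.mulVec fun i => g i (v i))) ∧
    (∀ v : Fin n → ℝ,
        (1 / 2) * ((fun i => g i (v i)) ⬝ᵥ X.mulVec fun i => g i (v i)) = 0 ↔
          ∀ i, v i ∈ Set.Icc (vlo i) (vhi i)) := by
  refine ⟨fun v => mul_nonneg (by norm_num) (hX.posSemidef.dotProduct_mulVec_self_nonneg _),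
    fun M => exists_le_norm_forall_le_of_tendsto_cobounded ?_ M, fun v => ?_⟩
  · -- `cobounded (Fin n → ℝ)` is by definition the coproduct of the factors' cobounded filters.
    have hg : Tendsto (fun (v : Fin n → ℝ) i => g i (v i)) (cobounded _) (cobounded _) :=
      Tendsto.pi_map_coprodᵢ fun i => tendsto_cobounded_of_tendsto_abs (hcoe1 i) (hcoe2 i)
    exact (hX.tendsto_dotProduct_mulVec_cobounded_atTop.comp hg).const_mul_atTop one_half_pos
  · simp only [mul_eq_zero, one_div, inv_eq_zero, OfNat.ofNat_ne_zero, false_or,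
      hX.dotProduct_mulVec_self_eq_zero_iff, funext_iff, Pi.zero_apply]
    exact forall_congr' fun i =>
      eq_zero_iff_mem_Icc_of_strictAntiOn (hlt i).le (hzero i) (hdec1 i) (hdec2 i)

theorem krasovskii_lyapunov_properties {n : ℕ} (X : Matrix (Fin n) (Fin n) ℝ)
    (hX : X.PosDef) (vlo vhi : Fin n → ℝ) (hlt : ∀ i, vlo i < vhi i)
    (g : Fin n → ℝ → ℝ)
    (hcont : ∀ i, Continuous (g i))
    (hzero : ∀ i, ∀ x ∈ Set.Icc (vlo i) (vhi i), g i x = 0)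
    (hdec1 : ∀ i, StrictAntiOn (g i) (Set.Iic (vlo i)))
    (hdec2 : ∀ i, StrictAntiOn (g i) (Set.Ici (vhi i)))
    (hcoe1 : ∀ i, Filter.Tendsto (fun x => |g i x|) Filter.atTop Filter.atTop)
    (hcoe2 : ∀ i, Filter.Tendsto (fun x => |g i x|) Filter.atBot Filter.atTop) :
    (∀ v : Fin n → ℝ,
        0 ≤ (1 / 2) * ((fun i => g i (v i)) ⬝ᵥ X.mulVec fun i => g i (v i))) ∧
    (∀ M : ℝ, ∃ R : ℝ, ∀ v : Fin n → ℝ, R ≤ ‖v‖ →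
        M ≤ (1 / 2) * ((fun i => g i (v i)) ⬝ᵥ X.mulVec fun i => g i (v i))) ∧
    (∀ v : Fin n → ℝ,
        (1 / 2) * ((fun i => g i (v i)) ⬝ᵥ X.mulVec fun i => g i (v i)) = 0 ↔
          ∀ i, v i ∈ Set.Icc (vlo i) (vhi i)) :=
  krasovskii_lyapunov_properties_general X hX vlo vhi hlt g hzero hdec1 hdec2 hcoe1 hcoe2
end

section
/- Suppose g : ℝⁿ → ℝⁿ acts componentwise, each g_i is continuously differentiable, nonincreasing on ℝ, strictly decreasing outside [v̲_i, v̄_i], zero on [v̲_i, v̄_i], and coercive (|g_i(x)| → ∞ as |x| → ∞). Let X be symmetric positive definite and let v(t) solve v̇ = X g(v) with any initial condition. Then t ↦ V(v(t)) = ½ g(v(t))ᵀ X g(v(t)) is nonincreasing. -/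
/-! Along a trajectory, `V = ½ gᵀ X g` has derivative `½ (2 ġᵀ X g) = (Xg)ᵀ diag(g'(v)) (Xg)`,
using `ġ = diag(g'(v)) v̇ = diag(g'(v)) X g` and the symmetry of `X`. This is a sum of terms
`g_i'(v_i) (Xg)_i²`, each nonpositive because `g_i` is nonincreasing. -/

open Matrix

section

variable {𝕜 ι : Type*} [NontriviallyNormedField 𝕜] {t : 𝕜}

theorem HasDerivAt.comp_pi {g : ι → 𝕜 → 𝕜} {g' : ι → 𝕜} {v : 𝕜 → ι → 𝕜} {v' : ι → 𝕜}
    (hv : HasDerivAt v v' t) (hg : ∀ i, HasDerivAt (g i) (g' i) (v t i)) :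
    HasDerivAt (fun s i => g i (v s i)) (fun i => g' i * v' i) t :=
  hasDerivAt_pi.mpr fun i => (hg i).comp t (hasDerivAt_pi.mp hv i)

variable [Fintype ι] {u w : 𝕜 → ι → 𝕜} {u' w' : ι → 𝕜}

theorem HasDerivAt.dotProduct (hu : HasDerivAt u u' t) (hw : HasDerivAt w w' t) :
    HasDerivAt (fun s => u s ⬝ᵥ w s) (u' ⬝ᵥ w t + u t ⬝ᵥ w') t :=
  (HasDerivAt.fun_sum fun i _ =>
    (hasDerivAt_pi.mp hu i).fun_mul (hasDerivAt_pi.mp hw i)).congr_deriv Finset.sum_add_distrib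

theorem HasDerivAt.mulVec (A : Matrix ι ι 𝕜) (hu : HasDerivAt u u' t) :
    HasDerivAt (fun s => A *ᵥ u s) (A *ᵥ u') t :=
  hasDerivAt_pi.mpr fun i =>
    ((hasDerivAt_const t (A i)).dotProduct hu).congr_deriv (by rw [zero_dotProduct, zero_add]; rfl)

theorem Matrix.IsSymm.dotProduct_mulVec_comm {A : Matrix ι ι 𝕜} (hA : A.IsSymm) (x y : ι → 𝕜) :
    x ⬝ᵥ A *ᵥ y = y ⬝ᵥ A *ᵥ x := by
  rw [dotProduct_mulVec, ← mulVec_transpose, hA.eq, dotProduct_comm]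

theorem HasDerivAt.dotProduct_mulVec_self {A : Matrix ι ι 𝕜} (hA : A.IsSymm)
    (hu : HasDerivAt u u' t) :
    HasDerivAt (fun s => u s ⬝ᵥ A *ᵥ u s) (2 * (u' ⬝ᵥ A *ᵥ u t)) t :=
  (hu.dotProduct (hu.mulVec A)).congr_deriv
    (by rw [hA.dotProduct_mulVec_comm (u t), two_mul])

end

theorem dotProduct_mul_self_nonpos {ι : Type*} [Fintype ι] {d : ι → ℝ} (hd : ∀ i, d i ≤ 0)
    (w : ι → ℝ) : (fun i => d i * w i) ⬝ᵥ w ≤ 0 :=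
  Finset.sum_nonpos fun i _ => by
    simpa only [mul_assoc] using mul_nonpos_of_nonpos_of_nonneg (hd i) (mul_self_nonneg (w i))

theorem lyapunov_nonincreasing_along_trajectory_general {n : ℕ}
    (X : Matrix (Fin n) (Fin n) ℝ) (hX : X.PosDef)
    (g : Fin n → ℝ → ℝ)
    (hC1 : ∀ i, ContDiff ℝ 1 (g i))
    (hanti : ∀ i, Antitone (g i))
    (v : ℝ → Fin n → ℝ)
    (hv : ∀ t, HasDerivAt v (X.mulVec fun i => g i (v t i)) t) :
    Antitone fun t =>
      (1 / 2) * ((fun i => g i (v t i)) ⬝ᵥ X.mulVec fun i => g i (v t i)) := by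
  have hg : ∀ i x, HasDerivAt (g i) (deriv (g i) x) x := fun i x =>
    ((hC1 i).differentiable one_ne_zero x).hasDerivAt
  have hXsymm : X.IsSymm := isHermitian_iff_isSymm.mp hX.isHermitian
  have hV : ∀ t, HasDerivAt
      (fun t => (1 / 2) * ((fun i => g i (v t i)) ⬝ᵥ X.mulVec fun i => g i (v t i)))
      ((fun i => deriv (g i) (v t i) * (X *ᵥ fun i => g i (v t i)) i) ⬝ᵥ
        X *ᵥ fun i => g i (v t i)) t := fun t =>
    ((((hv t).comp_pi fun i => hg i (v t i)).dotProduct_mulVec_self hXsymm).const_mul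
      (1 / 2)).congr_deriv (by ring)
  exact antitone_of_hasDerivAt_nonpos hV fun t =>
    dotProduct_mul_self_nonpos (fun i => (hanti i).deriv_nonpos) _

theorem lyapunov_nonincreasing_along_trajectory {n : ℕ}
    (X : Matrix (Fin n) (Fin n) ℝ) (hX : X.PosDef)
    (vlo vhi : Fin n → ℝ) (g : Fin n → ℝ → ℝ)
    (hC1 : ∀ i, ContDiff ℝ 1 (g i))
    (hanti : ∀ i, Antitone (g i))
    (hs1 : ∀ i, StrictAntiOn (g i) (Set.Iic (vlo i)))
    (hs2 : ∀ i, StrictAntiOn (g i) (Set.Ici (vhi i)))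
    (hzero : ∀ i, ∀ x ∈ Set.Icc (vlo i) (vhi i), g i x = 0)
    (hcoe1 : ∀ i, Filter.Tendsto (fun x => |g i x|) Filter.atTop Filter.atTop)
    (hcoe2 : ∀ i, Filter.Tendsto (fun x => |g i x|) Filter.atBot Filter.atTop)
    (v : ℝ → Fin n → ℝ)
    (hv : ∀ t, HasDerivAt v (X.mulVec fun i => g i (v t i)) t) :
    Antitone fun t =>
      (1 / 2) * ((fun i => g i (v t i)) ⬝ᵥ X.mulVec fun i => g i (v t i)) :=
  lyapunov_nonincreasing_along_trajectory_general X hX g hC1 hanti v hv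
end
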